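/- Let P ⊆ ℝ² be a finite set. Let OPT(Q) denote the minimum number of axis-aligned closed squares of side 2 whose union contains Q. For each k ∈ ℤ, let P_k = P ∩ (ℝ × [2k, 2k+2)) be the portion of P in the k-th horizontal strip of height 2. Then OPT(P) ≤ ∑_{k ∈ ℤ} OPT(P_k) ≤ 2·OPT(P). -/
import Mathlib

/-- The minimum number of axis-aligned closed squares of side 2 whose union contains `P`. -/
noncomputable def squareCoverNum (P : Finset (ℝ × ℝ)) : ℕ :=
  sInf {n | ∃ c : Fin n → ℝ × ℝ,
    ↑P ⊆ ⋃ i, Set.Icc (c i).1 ((c i).1 + 2) ×ˢ Set.Icc (c i).2 ((c i).2 + 2)}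

namespace SqAux

def sq (p : ℝ × ℝ) : Set (ℝ × ℝ) := Set.Icc p.1 (p.1 + 2) ×ˢ Set.Icc p.2 (p.2 + 2)

lemma scn_eq (P : Finset (ℝ × ℝ)) :
    squareCoverNum P = sInf {n | ∃ c : Fin n → ℝ × ℝ, ↑P ⊆ ⋃ i, sq (c i)} := rfl

lemma coverSet_nonempty (P : Finset (ℝ × ℝ)) :
    {n | ∃ c : Fin n → ℝ × ℝ, ↑P ⊆ ⋃ i, sq (c i)}.Nonempty := by
  refine ⟨P.card, fun i => ((P.equivFin.symm i : ℝ × ℝ).1 - 1,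
      (P.equivFin.symm i : ℝ × ℝ).2 - 1), ?_⟩
  intro x hx
  refine Set.mem_iUnion.mpr ⟨P.equivFin ⟨x, hx⟩, ?_⟩
  simp only [sq, Equiv.symm_apply_apply, Set.mem_prod, Set.mem_Icc]
  refine ⟨⟨by linarith, by linarith⟩, ⟨by linarith, by linarith⟩⟩

lemma exists_opt_cover (P : Finset (ℝ × ℝ)) :
    ∃ c : Fin (squareCoverNum P) → ℝ × ℝ, ↑P ⊆ ⋃ i, sq (c i) := by
  have := Nat.sInf_mem (coverSet_nonempty P)
  rw [scn_eq]
  exact this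

/-- bound from a finset of corners covering Q -/
lemma scn_le_card {Q : Finset (ℝ × ℝ)} {s : Finset (ℝ × ℝ)}
    (h : ↑Q ⊆ ⋃ p ∈ s, sq p) : squareCoverNum Q ≤ s.card := by
  rw [scn_eq]
  refine Nat.sInf_le ⟨fun i => (s.equivFin.symm i : ℝ × ℝ), ?_⟩
  intro x hx
  obtain ⟨p, hp, hxp⟩ := Set.mem_iUnion₂.mp (h hx)
  refine Set.mem_iUnion.mpr ⟨s.equivFin ⟨p, hp⟩, ?_⟩
  simpa using hxp

end SqAux

namespace SqAux

lemma scn_empty : squareCoverNum (∅ : Finset (ℝ × ℝ)) = 0 := by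
  have : squareCoverNum (∅ : Finset (ℝ × ℝ)) ≤ (∅ : Finset (ℝ × ℝ)).card :=
    scn_le_card (by simp)
  simpa using this

lemma floor_half_eq {k : ℤ} {y : ℝ} (h1 : 2 * k ≤ y) (h2 : y < 2 * k + 2) :
    ⌊y / 2⌋ = k := by
  rw [Int.floor_eq_iff]
  exact ⟨by linarith, by linarith⟩

end SqAux

open SqAux

theorem stmt_12 (P : Finset (ℝ × ℝ)) :
    squareCoverNum P ≤
      ∑ᶠ k : ℤ, squareCoverNum (P.filter fun p => p.2 ∈ Set.Ico (2 * k : ℝ) (2 * k + 2)) ∧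
    ∑ᶠ k : ℤ, squareCoverNum (P.filter fun p => p.2 ∈ Set.Ico (2 * k : ℝ) (2 * k + 2)) ≤
      2 * squareCoverNum P := by
  set Pk : ℤ → Finset (ℝ × ℝ) :=
    fun k => P.filter fun p => p.2 ∈ Set.Ico (2 * k : ℝ) (2 * k + 2) with hPk
  set f : ℤ → ℕ := fun k => squareCoverNum (Pk k) with hf
  set T : Finset ℤ := P.image (fun p => ⌊p.2 / 2⌋) with hT
  -- membership in strips
  have hmem : ∀ {x : ℝ × ℝ}, x ∈ P → x ∈ Pk ⌊x.2 / 2⌋ := by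
    intro x hx
    have h1 : (⌊x.2 / 2⌋ : ℝ) ≤ x.2 / 2 := Int.floor_le _
    have h2 : x.2 / 2 < ⌊x.2 / 2⌋ + 1 := Int.lt_floor_add_one _
    simp only [hPk, Finset.mem_filter, Set.mem_Ico]
    exact ⟨hx, by linarith, by linarith⟩
  -- support of f is inside T
  have hsupp : Function.support f ⊆ ↑T := by
    intro k hk
    simp only [Function.mem_support] at hk
    rcases (Pk k).eq_empty_or_nonempty with he | ⟨x, hx⟩
    · simp only [hf] at hk
      rw [he] at hk
      exact absurd scn_empty hk
    · simp only [hPk, Finset.mem_filter, Set.mem_Ico] at hx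
      obtain ⟨hxP, hx1, hx2⟩ := hx
      simp only [hT, Finset.mem_coe, Finset.mem_image]
      exact ⟨x, hxP, floor_half_eq hx1 hx2⟩
  have hfin : ∑ᶠ k : ℤ, f k = ∑ k ∈ T, f k :=
    finsum_eq_finset_sum_of_support_subset f hsupp
  constructor
  · -- first inequality
    rw [show (∑ᶠ k : ℤ, squareCoverNum (P.filter fun p =>
        p.2 ∈ Set.Ico (2 * k : ℝ) (2 * k + 2))) = ∑ᶠ k : ℤ, f k from rfl, hfin]
    -- choose optimal covers for each strip
    have hc : ∀ k : ℤ, ∃ c : Fin (f k) → ℝ × ℝ, ↑(Pk k) ⊆ ⋃ i, sq (c i) :=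
      fun k => exists_opt_cover (Pk k)
    choose cc hcc using hc
    set s : ℤ → Finset (ℝ × ℝ) := fun k => Finset.image (cc k) Finset.univ with hs
    have hcov : ↑P ⊆ ⋃ p ∈ (T.biUnion s), sq p := by
      intro x hx
      have hk : ⌊x.2 / 2⌋ ∈ T := Finset.mem_image.mpr ⟨x, hx, rfl⟩
      obtain ⟨i, hi⟩ := Set.mem_iUnion.mp (hcc ⌊x.2 / 2⌋ (hmem hx))
      refine Set.mem_iUnion₂.mpr ⟨cc ⌊x.2 / 2⌋ i, ?_, hi⟩
      exact Finset.mem_biUnion.mpr ⟨_, hk, Finset.mem_image_of_mem _ (Finset.mem_univ i)⟩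
    calc squareCoverNum P ≤ (T.biUnion s).card := scn_le_card hcov
      _ ≤ ∑ k ∈ T, (s k).card := Finset.card_biUnion_le
      _ ≤ ∑ k ∈ T, f k := by
          refine Finset.sum_le_sum fun k _ => ?_
          simpa using Finset.card_image_le (s := (Finset.univ : Finset (Fin (f k)))) (f := cc k)
  · -- second inequality
    rw [show (∑ᶠ k : ℤ, squareCoverNum (P.filter fun p =>
        p.2 ∈ Set.Ico (2 * k : ℝ) (2 * k + 2))) = ∑ᶠ k : ℤ, f k from rfl, hfin]
    set N := squareCoverNum P with hN
    obtain ⟨c, hc⟩ := exists_opt_cover P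
    set cond : ℤ → Fin N → Prop :=
      fun k i => ⌊(c i).2 / 2⌋ = k ∨ ⌊(c i).2 / 2⌋ + 1 = k with hcond
    have hdec : ∀ k i, Decidable (cond k i) := fun k i => by rw [hcond]; infer_instance
    set I : ℤ → Finset (Fin N) :=
      fun k => Finset.univ.filter (fun i => @decide (cond k i) (hdec k i)) with hI
    -- each strip is covered by its squares
    have hstrip : ∀ k, f k ≤ (I k).card := by
      intro k
      have hcov : ↑(Pk k) ⊆ ⋃ p ∈ (I k).image c, sq p := by
        intro x hx
        have hxk : x ∈ Pk k := hx
        simp only [hPk, Finset.mem_filter, Set.mem_Ico] at hxk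
        obtain ⟨hxP, hx1, hx2⟩ := hxk
        obtain ⟨i, hi⟩ := Set.mem_iUnion.mp (hc hxP)
        have hfl : ⌊x.2 / 2⌋ = k := floor_half_eq hx1 hx2
        have hy1 : (c i).2 ≤ x.2 := (hi.2).1
        have hy2 : x.2 ≤ (c i).2 + 2 := (hi.2).2
        have hm1 : ⌊(c i).2 / 2⌋ ≤ k := by
          rw [← hfl]; exact Int.floor_le_floor (by linarith)
        have hm2 : k ≤ ⌊(c i).2 / 2⌋ + 1 := by
          rw [← hfl]
          have : ⌊x.2 / 2⌋ ≤ ⌊(c i).2 / 2 + 1⌋ := Int.floor_le_floor (by linarith)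
          simpa [Int.floor_add_one] using this
        have hik : i ∈ I k := by
          simp only [hI, Finset.mem_filter, Finset.mem_univ, true_and, decide_eq_true_eq]
          omega
        exact Set.mem_iUnion₂.mpr ⟨c i, Finset.mem_image_of_mem c hik, hi⟩
      calc f k ≤ ((I k).image c).card := scn_le_card hcov
        _ ≤ (I k).card := Finset.card_image_le
    -- double counting
    have hcount : ∑ k ∈ T, (I k).card ≤ 2 * N := by
      have h1 : ∑ k ∈ T, (I k).card
          = ∑ i : Fin N, (T.filter (fun k => @decide (cond k i) (hdec k i))).card := by
        simp only [hI, Finset.card_filter]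
        exact Finset.sum_comm
      rw [h1]
      have h2 : ∀ i : Fin N,
          (T.filter (fun k => @decide (cond k i) (hdec k i))).card ≤ 2 := by
        intro i
        have hsub : T.filter (fun k => @decide (cond k i) (hdec k i)) ⊆
            {⌊(c i).2 / 2⌋, ⌊(c i).2 / 2⌋ + 1} := by
          intro k hk
          simp only [Finset.mem_filter, decide_eq_true_eq] at hk
          simp only [Finset.mem_insert, Finset.mem_singleton]
          omega
        calc _ ≤ ({⌊(c i).2 / 2⌋, ⌊(c i).2 / 2⌋ + 1} : Finset ℤ).card :=
              Finset.card_le_card hsub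
          _ ≤ 2 := Finset.card_insert_le _ _ |>.trans (by simp)
      calc ∑ i : Fin N, (T.filter (fun k => @decide (cond k i) (hdec k i))).card
          ≤ ∑ _i : Fin N, 2 := Finset.sum_le_sum fun i _ => h2 i
        _ = 2 * N := by simp [mul_comm]
    exact le_trans (Finset.sum_le_sum fun k _ => hstrip k) hcount
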